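/- arXiv:2506.03924 — 2 statements merged into one kernel-verified Lean document; each statement's English description precedes it below -/
import Mathlib

section
/- Let t > 0, c ∈ ℝ, let φ : ℝ → ℝ be Lebesgue integrable, and let ψ : ℝ × ℝ → ℝ be continuous with compact support. Define μ : ℝ → ℝ by μ(u) = ∫_ℝ φ(u − ct + x) dγ_t(x) − ∫_0^t ( ∫_ℝ ψ(s, u − c(t−s) + x) dγ_{t−s}(x) ) ds. Then the function u ↦ μ(u) − φ(u) is Lebesgue integrable on (0,∞) and ∫_0^∞ ( μ(u) − φ(u) ) du = ∫_ℝ φ(u) R(u) du − ∫_0^t ( ∫_ℝ ψ(s,v) · γ_{t−s}( [−v − c(t−s), ∞) ) dv ) ds, where R(u) = γ_t( [−u − ct, ∞) ) − 1_{[0,∞)}(u). -/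
/-!
Both terms of `μ` have the form `u ↦ ∫ f (u - d + x) ∂ν` with `ν = γ_τ`. Since the shear
`(u, x) ↦ (u + x, x)` preserves `volume ⊗ ν`, Fubini turns `∫_{u ≥ 0} ∫ f (u - d + x) ∂ν` into
`∫ f v · ν (Iic (v + d)) dv`, and the symmetry of `γ_τ` rewrites `ν (Iic w)` as `γ_τ (Ici (-w))`.
For the source term a second Fubini in `s` is legitimate because the `L¹` norm of the `s`-slice is
at most `‖ψ (s, ·)‖₁`, which is integrable in `s`.
-/

open MeasureTheory ProbabilityTheory Set
open scoped NNReal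

lemma integral_comp_add_prod (ν : Measure ℝ) [SFinite ν] {g : ℝ × ℝ → ℝ}
    (hg : AEStronglyMeasurable g (volume.prod ν)) :
    ∫ p, g (p.1 + p.2, p.2) ∂(volume.prod ν) = ∫ p, g p ∂(volume.prod ν) := by
  have hT := measurePreserving_add_prod volume ν
  have := integral_map (f := g) hT.measurable.aemeasurable (by rwa [hT.map_eq])
  rwa [hT.map_eq, eq_comm] at this

section Convolution

variable (ν : Measure ℝ) [IsFiniteMeasure ν] {f : ℝ → ℝ}

lemma MeasureTheory.Integrable.comp_fst_add_snd (hf : Integrable f) :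
    Integrable (fun p : ℝ × ℝ => f (p.1 + p.2)) (volume.prod ν) :=
  ((measurePreserving_add_prod volume ν).integrable_comp
    hf.aestronglyMeasurable.comp_fst).mpr (hf.comp_fst ν)

lemma integral_norm_integral_comp_add_le (hf : Integrable f) :
    ∫ u, ‖∫ x, f (u + x) ∂ν‖ ≤ ν.real univ * ∫ v, ‖f v‖ :=
  calc ∫ u, ‖∫ x, f (u + x) ∂ν‖
      ≤ ∫ u, ∫ x, ‖f (u + x)‖ ∂ν :=
        integral_mono (hf.comp_fst_add_snd ν).integral_prod_left.norm
          (hf.comp_fst_add_snd ν).norm.integral_prod_left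
          fun u => norm_integral_le_integral_norm _
    _ = ν.real univ * ∫ v, ‖f v‖ := by
        rw [← integral_prod _ (hf.comp_fst_add_snd ν).norm,
          integral_comp_add_prod ν (g := fun p => ‖f p.1‖) hf.norm.aestronglyMeasurable.comp_fst,
          integral_fun_fst (fun v => ‖f v‖), smul_eq_mul]

lemma setIntegral_Ici_integral_comp_add (hf : Integrable f) :
    ∫ u in Ici 0, ∫ x, f (u + x) ∂ν = ∫ v, f v * ν.real (Iic v) := by
  set H : ℝ × ℝ → ℝ := {p | p.2 ≤ p.1}.indicator fun p => f p.1 with hH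
  have hHint : Integrable H (volume.prod ν) :=
    (hf.comp_fst ν).indicator (measurableSet_le measurable_snd measurable_fst)
  calc ∫ u in Ici 0, ∫ x, f (u + x) ∂ν
      = ∫ u, ∫ x, H (u + x, x) ∂ν := by
        rw [← integral_indicator measurableSet_Ici]
        congr 1 with u
        by_cases hu : (0 : ℝ) ≤ u <;> simp [hH, hu]
    _ = ∫ p, H p ∂(volume.prod ν) := by
        rw [← integral_prod (fun p : ℝ × ℝ => H (p.1 + p.2, p.2)),
          integral_comp_add_prod ν hHint.aestronglyMeasurable]
        exact (measurePreserving_add_prod volume ν).integrable_comp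
          hHint.aestronglyMeasurable |>.mpr hHint
    _ = ∫ v, f v * ν.real (Iic v) := by
        rw [integral_prod _ hHint]
        congr 1 with v
        have : (fun x => H (v, x)) = (Iic v).indicator fun _ => f v := by
          ext x; simp [hH, indicator_apply]
        rw [this, integral_indicator_const _ measurableSet_Iic, smul_eq_mul, mul_comm]

variable (d : ℝ)

lemma integrable_integral_comp_sub_add (hf : Integrable f) :
    Integrable (fun u => ∫ x, f (u - d + x) ∂ν) := by
  simpa only [sub_add_eq_add_sub] using
    ((hf.comp_sub_right d).comp_fst_add_snd ν).integral_prod_left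

lemma integral_norm_integral_comp_sub_add_le (hf : Integrable f) :
    ∫ u, ‖∫ x, f (u - d + x) ∂ν‖ ≤ ν.real univ * ∫ v, ‖f v‖ := by
  simpa only [sub_add_eq_add_sub, integral_sub_right_eq_self (fun v => ‖f v‖)] using
    integral_norm_integral_comp_add_le ν (hf.comp_sub_right d)

lemma setIntegral_Ici_integral_comp_sub_add (hf : Integrable f) :
    ∫ u in Ici 0, ∫ x, f (u - d + x) ∂ν = ∫ v, f v * ν.real (Iic (v + d)) := by
  simp only [sub_add_eq_add_sub]
  rw [setIntegral_Ici_integral_comp_add ν (hf.comp_sub_right d),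
    ← integral_add_right_eq_self _ d]
  simp only [add_sub_cancel_right]

lemma integrable_mul_toReal_measure_Ici_neg_sub (hf : Integrable f) :
    Integrable (fun u => f u * (ν (Ici (-u - d))).toReal) := by
  refine hf.mul_bdd (c := ν.real univ)
    (Monotone.measurable fun u u' huu' => ?_).aestronglyMeasurable (ae_of_all _ fun u => ?_)
  · exact ENNReal.toReal_mono (measure_ne_top _ _) (measure_mono (Ici_subset_Ici.mpr (by linarith)))
  · rw [Real.norm_of_nonneg ENNReal.toReal_nonneg, ← measureReal_def]
    exact measureReal_mono (subset_univ _)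

end Convolution

lemma gaussianReal_Iic_eq_Ici_neg (v : ℝ≥0) (w : ℝ) :
    gaussianReal 0 v (Iic w) = gaussianReal 0 v (Ici (-w)) := by
  conv_rhs => rw [← neg_zero, ← gaussianReal_map_neg,
    Measure.map_apply measurable_neg measurableSet_Ici]
  simp

/- The closed half-line produces `Iic`, which matches `Ici (-w - d)` pointwise for every variance,
including the Dirac mass `v = 0` reached at `s = t` in the source term. -/
lemma setIntegral_Ici_integral_gaussianReal {f : ℝ → ℝ} (hf : Integrable f) (v : ℝ≥0) (d : ℝ) :
    ∫ u in Ici 0, ∫ x, f (u - d + x) ∂gaussianReal 0 v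
      = ∫ w, f w * (gaussianReal 0 v (Ici (-w - d))).toReal := by
  simp_rw [setIntegral_Ici_integral_comp_sub_add _ d hf, measureReal_def,
    gaussianReal_Iic_eq_Ici_neg, neg_add']

section SourceTerm

variable {ψ : ℝ × ℝ → ℝ} (t c : ℝ)

lemma stronglyMeasurable_integral_gaussianReal_drift (hψ : StronglyMeasurable ψ) :
    StronglyMeasurable fun p : ℝ × ℝ =>
      ∫ x, ψ (p.1, p.2 - c * (t - p.1) + x) ∂gaussianReal 0 (t - p.1).toNNReal := by
  let κ : Kernel (ℝ × ℝ) ℝ := ⟨fun p => gaussianReal 0 (t - p.1).toNNReal, by fun_prop⟩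
  have : IsMarkovKernel κ :=
    ⟨fun _ => inferInstanceAs (IsProbabilityMeasure (gaussianReal _ _))⟩
  exact StronglyMeasurable.integral_kernel_prod_right' (κ := κ)
    (f := fun q : (ℝ × ℝ) × ℝ => ψ (q.1.1, q.1.2 - c * (t - q.1.1) + q.2))
    (hψ.comp_measurable (by fun_prop))

lemma integrable_integral_gaussianReal_drift (hψ : Integrable ψ) (hψm : StronglyMeasurable ψ) :
    Integrable fun p : ℝ × ℝ =>
      ∫ x, ψ (p.1, p.2 - c * (t - p.1) + x) ∂gaussianReal 0 (t - p.1).toNNReal := by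
  have hm := stronglyMeasurable_integral_gaussianReal_drift t c hψm
  rw [Measure.volume_eq_prod] at hψ ⊢
  rw [integrable_prod_iff hm.aestronglyMeasurable]
  refine ⟨?_, hψ.integral_norm_prod_left.mono'
    hm.norm.integral_prod_right'.aestronglyMeasurable ?_⟩
  · filter_upwards [hψ.prod_right_ae] with s hs
    exact integrable_integral_comp_sub_add (gaussianReal 0 (t - s).toNNReal) _ hs
  · filter_upwards [hψ.prod_right_ae] with s hs
    rw [Real.norm_of_nonneg (integral_nonneg fun _ => norm_nonneg _)]
    simpa using integral_norm_integral_comp_sub_add_le (gaussianReal 0 (t - s).toNNReal) _ hs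

variable (S T : Set ℝ)

lemma integrableOn_setIntegral_integral_gaussianReal_drift (hψ : Integrable ψ)
    (hψm : StronglyMeasurable ψ) :
    IntegrableOn (fun u => ∫ s in S,
      ∫ x, ψ (s, u - c * (t - s) + x) ∂gaussianReal 0 (t - s).toNNReal) T :=
  ((integrable_integral_gaussianReal_drift t c hψ hψm).mono_measure
    (Measure.prod_mono Measure.restrict_le_self Measure.restrict_le_self)).integral_prod_right

lemma setIntegral_Ici_setIntegral_integral_gaussianReal_drift (hψ : Integrable ψ)
    (hψm : StronglyMeasurable ψ) :
    ∫ u in Ici 0, ∫ s in S, ∫ x, ψ (s, u - c * (t - s) + x) ∂gaussianReal 0 (t - s).toNNReal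
      = ∫ s in S, ∫ v, ψ (s, v) *
          (gaussianReal 0 (t - s).toNNReal (Ici (-v - c * (t - s)))).toReal := by
  rw [← integral_integral_swap
    (f := fun s u => ∫ x, ψ (s, u - c * (t - s) + x) ∂gaussianReal 0 (t - s).toNNReal)
    ((integrable_integral_gaussianReal_drift t c hψ hψm).mono_measure
      (Measure.prod_mono Measure.restrict_le_self Measure.restrict_le_self))]
  rw [Measure.volume_eq_prod] at hψ
  refine integral_congr_ae ?_
  filter_upwards [ae_restrict_of_ae hψ.prod_right_ae] with s hs
  exact setIntegral_Ici_integral_gaussianReal hs _ _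

end SourceTerm

/-- Lemma 5.3(ii)-(iii): the macroscopic current across the origin for the mild
solution `μ(t,·) = S_{−t}T_tφ − ∫_0^t S_{−(t−s)}T_{t−s}ψ(s,·) ds` of the drifted
heat equation with source, where `γ_τ` is the centered Gaussian law of variance `τ`. -/
theorem stmt_6 (t c : ℝ) (ht : 0 < t) (φ : ℝ → ℝ) (hφ : Integrable φ)
    (ψ : ℝ × ℝ → ℝ) (hψc : Continuous ψ) (hψs : HasCompactSupport ψ)
    (μ R : ℝ → ℝ)
    (hμ : ∀ u, μ u
      = (∫ x, φ (u - c * t + x) ∂(gaussianReal 0 t.toNNReal))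
        - ∫ s in (0 : ℝ)..t,
            ∫ x, ψ (s, u - c * (t - s) + x) ∂(gaussianReal 0 (t - s).toNNReal))
    (hR : ∀ u, R u
      = ((gaussianReal 0 t.toNNReal) (Set.Ici (-u - c * t))).toReal
        - if 0 ≤ u then 1 else 0) :
    IntegrableOn (fun u => μ u - φ u) (Set.Ioi 0) ∧
    ∫ u in Set.Ioi (0 : ℝ), (μ u - φ u)
      = (∫ u, φ u * R u)
        - ∫ s in (0 : ℝ)..t,
            ∫ v, ψ (s, v) *
              ((gaussianReal 0 (t - s).toNNReal)
                (Set.Ici (-v - c * (t - s)))).toReal := by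
  have hψ := hψc.integrable_of_hasCompactSupport (μ := volume) hψs
  have hA := integrable_integral_comp_sub_add (gaussianReal 0 t.toNNReal) (c * t) hφ
  have hB := integrableOn_setIntegral_integral_gaussianReal_drift t c (Ioc 0 t) (Ici 0) hψ
    hψc.stronglyMeasurable
  have hsplit : (fun u => μ u - φ u) = fun u =>
      ((∫ x, φ (u - c * t + x) ∂gaussianReal 0 t.toNNReal) - φ u)
        - ∫ s in Ioc 0 t, ∫ x, ψ (s, u - c * (t - s) + x) ∂gaussianReal 0 (t - s).toNNReal := by
    ext u
    rw [hμ, intervalIntegral.integral_of_le ht.le]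
    ring
  have hφR : ∫ u, φ u * R u = (∫ u, φ u * (gaussianReal 0 t.toNNReal (Ici (-u - c * t))).toReal)
      - ∫ u in Ici 0, φ u := by
    rw [← integral_indicator measurableSet_Ici, ← integral_sub
      (integrable_mul_toReal_measure_Ici_neg_sub _ _ hφ) (hφ.indicator measurableSet_Ici)]
    congr 1 with u
    by_cases hu : 0 ≤ u <;> simp [hR, hu, mul_sub]
  refine ⟨hsplit ▸ ((hA.integrableOn.sub hφ.integrableOn).sub hB).mono_set Ioi_subset_Ici_self, ?_⟩
  rw [hsplit, ← integral_Ici_eq_integral_Ioi, integral_sub ?_ hB,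
    integral_sub hA.integrableOn hφ.integrableOn, setIntegral_Ici_integral_gaussianReal hφ,
    setIntegral_Ici_setIntegral_integral_gaussianReal_drift t c _ hψ hψc.stronglyMeasurable, hφR,
    intervalIntegral.integral_of_le ht.le]
  exact hA.integrableOn.sub hφ.integrableOn
end

section
/- Let t > 0, c ∈ ℝ, and let φ : ℝ → ℝ be Lebesgue integrable. Then the function u ↦ ∫_ℝ φ(u − ct + x) dγ_t(x) − φ(u) is Lebesgue integrable on (0,∞) and ∫_0^∞ ( ∫_ℝ φ(u − ct + x) dγ_t(x) − φ(u) ) du = ∫_ℝ φ(u) ( γ_t( [−u − ct, ∞) ) − 1_{[0,∞)}(u) ) du. -/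
/-! Let `μ` be `γ_t` translated by `-ct`, so the inner integral is `∫ φ(u + x) dμ(x)`.
Since `(u, x) ↦ (u + x, x)` preserves `volume ⊗ μ`, the function `(u, x) ↦ φ(u + x)` is
integrable, and two applications of Fubini give
`∫_{u>0} ∫ φ(u + x) dμ(x) du = ∫ dμ(x) ∫_{y>x} φ(y) dy = ∫ φ(y) μ(-∞, y) dy`.
Finally `μ(-∞, y) = γ_t(-∞, y + ct) = γ_t[-y - ct, ∞)` by the symmetry of the centred Gaussian. -/

open MeasureTheory ProbabilityTheory Set

theorem MeasureTheory.Integrable.comp_add_prod {G E : Type*} [MeasurableSpace G] [AddGroup G]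
    [MeasurableAdd₂ G] [NormedAddCommGroup E] {μ : Measure G} [SFinite μ]
    [μ.IsAddRightInvariant] (ν : Measure G) [IsFiniteMeasure ν] {f : G → E}
    (hf : Integrable f μ) : Integrable (fun z : G × G => f (z.1 + z.2)) (μ.prod ν) :=
  (measurePreserving_add_prod μ ν).integrable_comp_of_integrable (hf.comp_fst ν)

theorem setIntegral_Ioi_zero_comp_add (φ : ℝ → ℝ) (x : ℝ) :
    ∫ u in Ioi 0, φ (u + x) = ∫ y in Ioi x, φ y := by
  simpa using (measurePreserving_add_right volume x).setIntegral_preimage_emb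
    (measurableEmbedding_addRight x) φ (Ioi x)

section

variable (μ : Measure ℝ) [IsFiniteMeasure μ] {φ : ℝ → ℝ}

theorem integral_Ioi_integral_comp_add (hφ : Integrable φ) :
    ∫ u in Ioi 0, ∫ x, φ (u + x) ∂μ = ∫ y, μ.real (Iio y) * φ y := by
  have hprod : Integrable (fun z : ℝ × ℝ => φ (z.1 + z.2))
      ((volume.restrict (Ioi 0)).prod μ) := by
    rw [Measure.restrict_prod_eq_prod_univ]
    exact (hφ.comp_add_prod μ).restrict
  have hlt : Integrable (fun z : ℝ × ℝ => {z | z.1 < z.2}.indicator (fun z => φ z.2) z)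
      (μ.prod volume) :=
    (hφ.comp_snd μ).indicator (measurableSet_lt measurable_fst measurable_snd)
  calc ∫ u in Ioi 0, ∫ x, φ (u + x) ∂μ
      = ∫ x, (∫ u in Ioi 0, φ (u + x)) ∂μ := integral_integral_swap hprod
    _ = ∫ x, (∫ y, {z : ℝ × ℝ | z.1 < z.2}.indicator (fun z => φ z.2) (x, y)) ∂μ := by
      congr 1 with x
      rw [setIntegral_Ioi_zero_comp_add, ← integral_indicator measurableSet_Ioi]
      rfl
    _ = ∫ y, ∫ x, {z : ℝ × ℝ | z.1 < z.2}.indicator (fun z => φ z.2) (x, y) ∂μ :=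
      integral_integral_swap hlt
    _ = ∫ y, μ.real (Iio y) * φ y := by
      congr 1 with y
      rw [← smul_eq_mul, ← integral_indicator_const _ measurableSet_Iio]
      rfl

theorem integral_Ioi_integral_comp_add_sub [IsProbabilityMeasure μ] (hφ : Integrable φ) :
    IntegrableOn (fun u => (∫ x, φ (u + x) ∂μ) - φ u) (Ioi 0) ∧
    ∫ u in Ioi 0, ((∫ x, φ (u + x) ∂μ) - φ u)
      = ∫ y, φ y * (μ.real (Iio y) - if 0 ≤ y then 1 else 0) := by
  have hconv : Integrable (fun u => ∫ x, φ (u + x) ∂μ) :=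
    (hφ.comp_add_prod μ).integral_prod_left
  have hmono : Monotone fun y => μ.real (Iio y) :=
    fun a b hab => measureReal_mono (Iio_subset_Iio hab)
  have hcdf : Integrable (fun y => μ.real (Iio y) * φ y) := by
    refine hφ.bdd_mul (c := μ.real univ) hmono.measurable.aestronglyMeasurable
      (ae_of_all _ fun y => ?_)
    rw [Real.norm_of_nonneg measureReal_nonneg]
    exact measureReal_mono (subset_univ _)
  refine ⟨(hconv.sub hφ).integrableOn, ?_⟩
  rw [integral_sub hconv.integrableOn hφ.integrableOn, integral_Ioi_integral_comp_add μ hφ,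
    ← integral_Ici_eq_integral_Ioi, ← integral_indicator measurableSet_Ici,
    ← integral_sub hcdf (hφ.indicator measurableSet_Ici)]
  congr 1 with y
  by_cases hy : 0 ≤ y <;> simp [hy, mul_sub, mul_comm]

end

theorem gaussianReal_Iio_eq_Ici_neg {v : NNReal} (hv : v ≠ 0) (b : ℝ) :
    gaussianReal 0 v (Iio b) = gaussianReal 0 v (Ici (-b)) := by
  have : NullSingletonClass (gaussianReal 0 v) := nullSingletonClass_gaussianReal hv
  conv_rhs => rw [← neg_zero, ← gaussianReal_map_neg]
  rw [Measure.map_apply measurable_neg measurableSet_Ici,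
    measure_congr (Iio_ae_eq_Iic' (measure_singleton b))]
  simp

/-- Term I (equation (C1)) in the proof of Lemma 5.3: with `γ_t` the centered
Gaussian law of variance `t`,
`∫_0^∞ (∫ φ(u − ct + x) dγ_t(x) − φ(u)) du = ∫_ℝ φ(u) (γ_t[−u−ct, ∞) − 1_{[0,∞)}(u)) du`. -/
theorem stmt_7 (t c : ℝ) (ht : 0 < t) (φ : ℝ → ℝ) (hφ : Integrable φ) :
    IntegrableOn
      (fun u => (∫ x, φ (u - c * t + x) ∂(gaussianReal 0 t.toNNReal)) - φ u)
      (Set.Ioi 0) ∧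
    ∫ u in Set.Ioi (0 : ℝ),
        ((∫ x, φ (u - c * t + x) ∂(gaussianReal 0 t.toNNReal)) - φ u)
      = ∫ u, φ u * (((gaussianReal 0 t.toNNReal) (Set.Ici (-u - c * t))).toReal
          - if 0 ≤ u then 1 else 0) := by
  set γ := gaussianReal 0 t.toNNReal
  set μ := γ.map (· - c * t)
  have : IsProbabilityMeasure μ := Measure.isProbabilityMeasure_map (by fun_prop)
  have hshift : ∀ u, ∫ x, φ (u - c * t + x) ∂γ = ∫ x, φ (u + x) ∂μ := fun u => by
    rw [(measurableEmbedding_subRight (c * t)).integral_map]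
    simp only [sub_add_eq_add_sub, add_sub_assoc]
  have hcdf : ∀ u, μ.real (Iio u) = (γ (Ici (-u - c * t))).toReal := fun u => by
    rw [measureReal_def, Measure.map_apply (measurable_sub_const _) measurableSet_Iio,
      preimage_sub_const_Iio, gaussianReal_Iio_eq_Ici_neg (by simpa using ht), neg_add']
  simp_rw [hshift, ← hcdf]
  exact integral_Ioi_integral_comp_add_sub μ hφ
end
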